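/- arXiv:math/0607533 — 5 statements merged into one kernel-verified Lean document; each statement's English description precedes it below -/
import Mathlib

section
/- Let G be a group acting on finite sets E and F, and let π : E → F be a G-equivariant map. Let y_1,...,y_r be representatives of the orbits of G on F. Then the number of orbits of G on E equals the sum over i from 1 to r of the number of orbits of the stabilizer Stab_G(y_i) acting on the fiber π^{-1}({y_i}). -/
open MulAction

theorem stmt1 {G E F : Type*} [Group G] [Finite E] [Finite F]
    [MulAction G E] [MulAction G F]
    (π : E → F) (hπ : ∀ (g : G) (x : E), π (g • x) = g • π x)
    (r : ℕ) (y : Fin r → F)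
    (hy : ∀ z : F, ∃! i : Fin r, z ∈ MulAction.orbit G (y i)) :
    Nat.card (MulAction.orbitRel.Quotient G E) =
      ∑ i : Fin r, Nat.card {s : Set E // ∃ x : E, π x = y i ∧
        s = {x' : E | ∃ g ∈ MulAction.stabilizer G (y i), g • x = x'}} := by
  classical
  -- key lemma: the stabilizer-orbit set only depends on the G-orbit point within the fiber
  have key : ∀ (i : Fin r) (x₀ : E) (g : G), π x₀ = y i → π (g • x₀) = y i →
      {x' : E | ∃ h ∈ MulAction.stabilizer G (y i), h • x₀ = x'} =
      {x' : E | ∃ h ∈ MulAction.stabilizer G (y i), h • (g • x₀) = x'} := by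
    intro i x₀ g h0 h1
    have hg : g ∈ MulAction.stabilizer G (y i) := by
      have : π (g • x₀) = g • y i := by rw [hπ, h0]
      rw [MulAction.mem_stabilizer_iff, ← this, h1]
    ext x'
    constructor
    · rintro ⟨h, hh, rfl⟩
      exact ⟨h * g⁻¹, mul_mem hh (inv_mem hg), by rw [mul_smul, inv_smul_smul]⟩
    · rintro ⟨h, hh, rfl⟩
      exact ⟨h * g, mul_mem hh hg, by rw [mul_smul]⟩
  -- the sigma type
  let T : Fin r → Type _ := fun i => {s : Set E // ∃ x : E, π x = y i ∧
        s = {x' : E | ∃ g ∈ MulAction.stabilizer G (y i), g • x = x'}}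
  let Φ : (Σ i, T i) → MulAction.orbitRel.Quotient G E := fun p =>
    Quotient.mk'' p.2.2.choose
  have hΦbij : Function.Bijective Φ := by
    constructor
    · rintro ⟨i, s, hs⟩ ⟨j, t, ht⟩ h
      obtain ⟨hxi, hsi⟩ := hs.choose_spec
      obtain ⟨hxj, htj⟩ := ht.choose_spec
      have hrel : hs.choose ∈ MulAction.orbit G ht.choose := by
        rw [← MulAction.orbitRel_apply]
        exact Quotient.exact' h
      obtain ⟨g, hg⟩ := hrel
      have hg' : g • ht.choose = hs.choose := hg
      have hij : i = j := by
        have h1 : y i ∈ MulAction.orbit G (y j) := by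
          refine ⟨g, ?_⟩
          show g • y j = y i
          rw [← hxj, ← hπ, hg', hxi]
        obtain ⟨k, hk1, hk2⟩ := hy (y i)
        exact (hk2 i (MulAction.mem_orbit_self _)).trans (hk2 j h1).symm
      subst hij
      have hst : s = t := by
        rw [hsi, htj]
        have := key i ht.choose g hxj (by rw [hg']; exact hxi)
        rw [this, hg']
      simp [hst]
    · intro q
      obtain ⟨x, rfl⟩ := Quotient.exists_rep q
      obtain ⟨i, hi, _⟩ := hy (π x)
      obtain ⟨g, hg⟩ := hi
      have hg' : g • y i = π x := hg
      have hx0 : π (g⁻¹ • x) = y i := by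
        rw [hπ, ← hg', inv_smul_smul]
      refine ⟨⟨i, ⟨{x' : E | ∃ h ∈ MulAction.stabilizer G (y i), h • (g⁻¹ • x) = x'},
        ⟨g⁻¹ • x, hx0, rfl⟩⟩⟩, ?_⟩
      -- Φ of this is ⟦choose⟧ where choose is in the same stabilizer orbit
      show Quotient.mk'' _ = _
      set w := (⟨g⁻¹ • x, hx0, rfl⟩ :
        ∃ x₀ : E, π x₀ = y i ∧ ({x' : E | ∃ h ∈ MulAction.stabilizer G (y i), h • (g⁻¹ • x) = x'})
          = {x' : E | ∃ h ∈ MulAction.stabilizer G (y i), h • x₀ = x'}) with hw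
      obtain ⟨hw1, hw2⟩ := w.choose_spec
      have hmem : g⁻¹ • x ∈ {x' : E | ∃ h ∈ MulAction.stabilizer G (y i), h • w.choose = x'} := by
        rw [← hw2]
        exact ⟨1, one_mem _, one_smul _ _⟩
      obtain ⟨h, _, hh⟩ := hmem
      apply Quotient.sound'
      rw [MulAction.orbitRel_apply]
      refine ⟨(g * h)⁻¹, ?_⟩
      show (g * h)⁻¹ • x = _
      rw [mul_inv_rev, mul_smul]
      conv_lhs => rw [← hh, inv_smul_smul]
  -- now count
  have : Nat.card (Σ i, T i) = Nat.card (MulAction.orbitRel.Quotient G E) :=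
    Nat.card_eq_of_bijective Φ hΦbij
  rw [← this]
  have : ∀ i, Finite (T i) := fun i => by
    have : Finite (Set E) := by infer_instance
    exact Subtype.finite
  have hfin : ∀ i, Fintype (T i) := fun i => Fintype.ofFinite _
  rw [Nat.card_eq_fintype_card, Fintype.card_sigma]
  exact Finset.sum_congr rfl fun i _ => (Nat.card_eq_fintype_card).symm
end

section
/- Let V be an n-dimensional vector space over a finite field, and let 1 ≤ r ≤ k ≤ n/2. Let F_r denote the complex vector space of functions from the Grassmannian G(r,V) to ℂ, and similarly F_k. Then the linear map φ : F_r → F_k defined by φ(f)(H) = Σ_{P ⊆ H, dim P = r} f(P) (sum over r-dimensional subspaces P contained in H) is injective. -/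
open Module Submodule Function

namespace Stmt4Aux

variable {F : Type*} [Field F] [Fintype F]

/-- number of `j`-dimensional subspaces of `W` -/
noncomputable def cnt (F : Type*) [Field F] (j : ℕ) (W : Type*) [AddCommGroup W]
    [Module F W] : ℕ :=
  Nat.card {K : Submodule F W // finrank F K = j}

lemma cnt_congr {W W' : Type*} [AddCommGroup W] [Module F W] [AddCommGroup W'] [Module F W']
    (e : W ≃ₗ[F] W') (j : ℕ) : cnt F j W = cnt F j W' := by
  refine Nat.card_congr ((Submodule.orderIsoMapComap e).toEquiv.subtypeEquiv (fun K => ?_))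
  show finrank F K = j ↔ finrank F (K.map (e : W →ₗ[F] W')) = j
  rw [LinearEquiv.finrank_map_eq]

lemma cnt_model (j : ℕ) (W : Type*) [AddCommGroup W] [Module F W] [FiniteDimensional F W] :
    cnt F j W = cnt F j (Fin (finrank F W) → F) := by
  refine cnt_congr ?_ j
  exact (Module.finBasis F W).equivFun

lemma cnt_eq_of_finrank {W W' : Type*} [AddCommGroup W] [Module F W] [AddCommGroup W']
    [Module F W'] [FiniteDimensional F W] [FiniteDimensional F W']
    (h : finrank F W = finrank F W') (j : ℕ) : cnt F j W = cnt F j W' := by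
  rw [cnt_model j W, cnt_model j W', h]

/-- number of lines in a `d`-dimensional space -/
noncomputable def Lc (F : Type*) [Field F] (d : ℕ) : ℕ := cnt F 1 (Fin d → F)

/-- number of hyperplanes in a `d`-dimensional space -/
noncomputable def Hc (F : Type*) [Field F] (d : ℕ) : ℕ := cnt F (d - 1) (Fin d → F)

lemma exists_submodule_finrank {W : Type*} [AddCommGroup W] [Module F W]
    [FiniteDimensional F W] {j : ℕ} (h : j ≤ finrank F W) :
    ∃ K : Submodule F W, finrank F K = j := by
  have b := Module.finBasis F W
  refine ⟨span F (Set.range (b ∘ Fin.castLE h)), ?_⟩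
  rw [finrank_span_eq_card (b.linearIndependent.comp (Fin.castLE h) (Fin.castLE_injective h))]
  simp

section counts

variable {W : Type*} [AddCommGroup W] [Module F W] [FiniteDimensional F W]

instance : Finite (Submodule F W) := by
  haveI : Finite W := Module.finite_of_finite F
  exact Finite.of_injective (fun (K : Submodule F W) => (K : Set W)) SetLike.coe_injective

lemma cnt_pos_one (h : 1 ≤ finrank F W) : 0 < cnt F 1 W := by
  haveI : Nontrivial W := Module.nontrivial_of_finrank_pos (R := F) (show 0 < finrank F W by omega)
  obtain ⟨v, hv⟩ := exists_ne (0 : W)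
  have : Nonempty {K : Submodule F W // finrank F K = 1} := ⟨⟨F ∙ v, finrank_span_singleton hv⟩⟩
  exact Nat.card_pos

lemma cnt_zero : cnt F 0 W = 1 := by
  haveI : Unique {K : Submodule F W // finrank F K = 0} :=
    { default := ⟨⊥, finrank_bot F W⟩
      uniq := fun K => Subtype.ext (Submodule.finrank_eq_zero.mp K.2) }
  exact Nat.card_unique

lemma cnt_full : cnt F (finrank F W) W = 1 := by
  haveI : Unique {K : Submodule F W // finrank F K = finrank F W} :=
    { default := ⟨⊤, finrank_top F W⟩
      uniq := fun K => Subtype.ext (Submodule.eq_top_of_finrank_eq K.2) }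
  exact Nat.card_unique

lemma cnt_sub_le (K : Submodule F W) (j : ℕ) : cnt F j ↥K ≤ cnt F j W := by
  refine Nat.card_le_card_of_injective
    (fun L => (⟨L.1.map K.subtype, by rw [Submodule.finrank_map_subtype_eq]; exact L.2⟩ :
      {L : Submodule F W // finrank F L = j})) ?_
  intro L1 L2 h
  have h' := congrArg Subtype.val h
  simp only at h'
  refine Subtype.ext ?_
  have := congrArg (Submodule.comap K.subtype) h'
  rwa [Submodule.comap_map_eq_of_injective K.injective_subtype,
    Submodule.comap_map_eq_of_injective K.injective_subtype] at this

lemma cnt_one_lt (K : Submodule F W) (h : finrank F K < finrank F W) :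
    cnt F 1 ↥K < cnt F 1 W := by
  classical
  letI := Fintype.ofFinite (Submodule F W)
  letI := Fintype.ofFinite (Submodule F ↥K)
  letI : Fintype {L : Submodule F ↥K // finrank F L = 1} := Subtype.fintype _
  letI : Fintype {L : Submodule F W // finrank F L = 1} := Subtype.fintype _
  have hKne : K ≠ ⊤ := by
    intro hK
    rw [hK, finrank_top] at h
    omega
  obtain ⟨v, hvK⟩ : ∃ v : W, v ∉ K := by
    by_contra hc
    push_neg at hc
    exact hKne (Submodule.eq_top_iff'.mpr hc)
  have hv0 : v ≠ 0 := fun h0 => hvK (h0 ▸ K.zero_mem)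
  rw [cnt, cnt, Nat.card_eq_fintype_card, Nat.card_eq_fintype_card]
  refine Fintype.card_lt_of_injective_of_notMem
    (fun L => (⟨L.1.map K.subtype, by rw [Submodule.finrank_map_subtype_eq]; exact L.2⟩ :
      {L : Submodule F W // finrank F L = 1})) ?_ (b := ⟨F ∙ v, finrank_span_singleton hv0⟩) ?_
  · intro L1 L2 hL
    have h' := congrArg Subtype.val hL
    simp only at h'
    refine Subtype.ext ?_
    have := congrArg (Submodule.comap K.subtype) h'
    rwa [Submodule.comap_map_eq_of_injective K.injective_subtype,
      Submodule.comap_map_eq_of_injective K.injective_subtype] at this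
  · rintro ⟨L, hL⟩
    have h1 : (F ∙ v) = L.1.map K.subtype := (congrArg Subtype.val hL).symm
    have h2 : v ∈ L.1.map K.subtype := h1 ▸ Submodule.mem_span_singleton_self v
    exact hvK (map_subtype_le K L.1 h2)

end counts

lemma Lc_strict_mono {d1 d2 : ℕ} (h : d1 < d2) : Lc F d1 < Lc F d2 := by
  obtain ⟨K, hK⟩ := exists_submodule_finrank (W := Fin d2 → F) (j := d1)
    (by rw [Module.finrank_fin_fun]; omega)
  have h1 : Lc F d1 = cnt F 1 ↥K := by
    rw [Lc, cnt_model 1 ↥K, hK]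
  rw [h1, Lc]
  exact cnt_one_lt K (by rw [hK, Module.finrank_fin_fun]; omega)

lemma Lc_pos {d : ℕ} (h : 1 ≤ d) : 0 < Lc F d :=
  cnt_pos_one (by rw [Module.finrank_fin_fun]; omega)

lemma ann_le {W : Type*} [AddCommGroup W] [Module F W] [FiniteDimensional F W] (j : ℕ)
    (hj : j ≤ finrank F W) :
    cnt F j W ≤ cnt F (finrank F W - j) (Module.Dual F W) := by
  refine Nat.card_le_card_of_injective (fun K =>
    (⟨K.1.dualAnnihilator, ?_⟩ : {Φ : Submodule F (Module.Dual F W) //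
      finrank F Φ = finrank F W - j})) ?_
  · rw [(Subspace.quotEquivAnnihilator K.1).symm.finrank_eq]
    have := Submodule.finrank_quotient_add_finrank K.1
    rw [K.2] at this
    omega
  · intro K1 K2 h
    have h' := congrArg Subtype.val h
    simp only at h'
    refine Subtype.ext ?_
    have := congrArg Submodule.dualCoannihilator h'
    rwa [Subspace.dualAnnihilator_dualCoannihilator_eq,
      Subspace.dualAnnihilator_dualCoannihilator_eq] at this

lemma Hc_eq_Lc {d : ℕ} (hd : 1 ≤ d) : Hc F d = Lc F d := by
  have hfr : finrank F (Fin d → F) = d := Module.finrank_fin_fun F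
  have hdual : finrank F (Module.Dual F (Fin d → F)) = d := by
    rw [Subspace.dual_finrank_eq, hfr]
  refine le_antisymm ?_ ?_
  · have h1 := ann_le (W := Fin d → F) (d - 1) (by rw [hfr]; omega)
    rw [hfr] at h1
    rw [show d - (d - 1) = 1 by omega] at h1
    calc Hc F d ≤ cnt F 1 (Module.Dual F (Fin d → F)) := by
          exact h1
      _ = Lc F d := by rw [Lc]; exact cnt_eq_of_finrank (by rw [hdual, hfr]) 1
  · have h1 := ann_le (W := Fin d → F) 1 (by rw [hfr]; omega)
    rw [hfr] at h1
    calc Lc F d ≤ cnt F (d - 1) (Module.Dual F (Fin d → F)) := h1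
      _ = Hc F d := by rw [Hc]; exact cnt_eq_of_finrank (by rw [hdual, hfr]) (d - 1)

section interval

variable {F V : Type*} [Field F] [Fintype F] [AddCommGroup V] [Module F V]
  [FiniteDimensional F V]

lemma finrank_map_mkQ_add (p K : Submodule F V) (h : p ≤ K) :
    finrank F (K.map p.mkQ) + finrank F p = finrank F K := by
  let f : ↥K →ₗ[F] V ⧸ p := p.mkQ.comp K.subtype
  have hrange : LinearMap.range f = K.map p.mkQ := by
    rw [LinearMap.range_comp, Submodule.range_subtype]
  have hker : LinearMap.ker f = Submodule.comap K.subtype p := by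
    rw [LinearMap.ker_comp, Submodule.ker_mkQ]
  have h1 := LinearMap.finrank_range_add_finrank_ker f
  rw [hrange, hker] at h1
  rw [(Submodule.comapSubtypeEquivOfLe h).finrank_eq] at h1
  exact h1

lemma card_zero_of_lt (P H : Submodule F V) (j : ℕ) (hj : j < finrank F P) :
    Nat.card {K : Submodule F V // finrank F K = j ∧ (P ≤ K ∧ K ≤ H)} = 0 := by
  haveI : IsEmpty {K : Submodule F V // finrank F K = j ∧ (P ≤ K ∧ K ≤ H)} := by
    refine ⟨fun K => ?_⟩
    have := Submodule.finrank_mono K.2.2.1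
    omega
  exact Nat.card_of_isEmpty

lemma card_zero_of_gt (P H : Submodule F V) (j : ℕ) (hj : finrank F H < j) :
    Nat.card {K : Submodule F V // finrank F K = j ∧ (P ≤ K ∧ K ≤ H)} = 0 := by
  haveI : IsEmpty {K : Submodule F V // finrank F K = j ∧ (P ≤ K ∧ K ≤ H)} := by
    refine ⟨fun K => ?_⟩
    have := Submodule.finrank_mono K.2.2.2
    omega
  exact Nat.card_of_isEmpty

/-- The master counting lemma: the number of `j`-dimensional subspaces between `P` and `H`. -/
lemma card_interval (P H : Submodule F V) (hPH : P ≤ H) (j : ℕ) (hj : finrank F P ≤ j) :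
    Nat.card {K : Submodule F V // finrank F K = j ∧ (P ≤ K ∧ K ≤ H)}
      = cnt F (j - finrank F P) (Fin (finrank F H - finrank F P) → F) := by
  set P' : Submodule F ↥H := P.comap H.subtype with hP'
  have hP'rank : finrank F P' = finrank F P := (Submodule.comapSubtypeEquivOfLe hPH).finrank_eq
  have hPmap : P'.map H.subtype = P := by
    rw [hP', Submodule.map_comap_subtype, inf_eq_right.mpr hPH]
  -- step 1 : interval in V ≃ interval above P' in ↥H
  have e1 : {K : Submodule F V // finrank F K = j ∧ (P ≤ K ∧ K ≤ H)} ≃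
      {K' : Submodule F ↥H // finrank F K' = j ∧ P' ≤ K'} := by
    refine
      { toFun := fun K => ⟨K.1.comap H.subtype, ?_, ?_⟩
        invFun := fun K' => ⟨K'.1.map H.subtype, ?_, ?_, ?_⟩
        left_inv := ?_
        right_inv := ?_ }
    · rw [(Submodule.comapSubtypeEquivOfLe K.2.2.2).finrank_eq]; exact K.2.1
    · rw [hP']; exact Submodule.comap_mono K.2.2.1
    · rw [Submodule.finrank_map_subtype_eq]; exact K'.2.1
    · rw [← hPmap]; exact Submodule.map_mono K'.2.2
    · exact map_subtype_le H K'.1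
    · intro K
      refine Subtype.ext ?_
      show (K.1.comap H.subtype).map H.subtype = K.1
      rw [Submodule.map_comap_subtype, inf_eq_right.mpr K.2.2.2]
    · intro K'
      refine Subtype.ext ?_
      show (K'.1.map H.subtype).comap H.subtype = K'.1
      rw [Submodule.comap_map_eq_of_injective H.injective_subtype]
  -- step 2 : interval above P' in ↥H ≃ submodules of the quotient
  have e2 : {K' : Submodule F ↥H // finrank F K' = j ∧ P' ≤ K'} ≃
      {K'' : Submodule F (↥H ⧸ P') // finrank F K'' = j - finrank F P} := by
    refine
      { toFun := fun K' => ⟨K'.1.map P'.mkQ, ?_⟩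
        invFun := fun K'' => ⟨K''.1.comap P'.mkQ, ?_, ?_⟩
        left_inv := ?_
        right_inv := ?_ }
    · have := finrank_map_mkQ_add P' K'.1 K'.2.2
      rw [hP'rank, K'.2.1] at this
      omega
    · have heq : (K''.1.comap P'.mkQ).map P'.mkQ = K''.1 :=
        Submodule.map_comap_eq_of_surjective P'.mkQ_surjective K''.1
      have hle : P' ≤ K''.1.comap P'.mkQ := by
        intro x hx
        rw [Submodule.mem_comap, Submodule.mkQ_apply, (Submodule.Quotient.mk_eq_zero P').mpr hx]
        exact K''.1.zero_mem
      have := finrank_map_mkQ_add P' (K''.1.comap P'.mkQ) hle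
      rw [heq, hP'rank, K''.2] at this
      omega
    · intro x hx
      rw [Submodule.mem_comap, Submodule.mkQ_apply, (Submodule.Quotient.mk_eq_zero P').mpr hx]
      exact K''.1.zero_mem
    · intro K'
      refine Subtype.ext ?_
      show (K'.1.map P'.mkQ).comap P'.mkQ = K'.1
      rw [Submodule.comap_map_eq, Submodule.ker_mkQ, sup_eq_left.mpr K'.2.2]
    · intro K''
      refine Subtype.ext ?_
      exact Submodule.map_comap_eq_of_surjective P'.mkQ_surjective K''.1
  rw [Nat.card_congr (e1.trans e2)]
  show cnt F (j - finrank F P) (↥H ⧸ P') = _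
  rw [cnt_model (F := F) (j - finrank F P) (↥H ⧸ P')]
  have hq := Submodule.finrank_quotient_add_finrank P'
  rw [hP'rank] at hq
  have hq2 : finrank F (↥H ⧸ P') = finrank F ↥H - finrank F ↥P := by omega
  rw [hq2]

end interval

section ops

variable {F V : Type*} [Field F] [Fintype F] [AddCommGroup V] [Module F V]
  [FiniteDimensional F V]

variable (F V) in
abbrev Gr (j : ℕ) := {P : Submodule F V // finrank F P = j}

noncomputable def inc (a b : ℕ) (f : Gr F V a → ℂ) (H : Gr F V b) : ℂ :=
  ∑ᶠ P : {P : Submodule F V // finrank F P = a ∧ P ≤ (H : Submodule F V)}, f ⟨P.1, P.2.1⟩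

noncomputable def dec (a b : ℕ) (f : Gr F V b → ℂ) (P : Gr F V a) : ℂ :=
  ∑ᶠ H : {H : Submodule F V // finrank F H = b ∧ (P : Submodule F V) ≤ H}, f ⟨H.1, H.2.1⟩

open scoped Classical in
lemma finsum_split (a : ℕ) (q : Submodule F V → Prop) (f : Gr F V a → ℂ) :
    ∑ᶠ P : {P : Submodule F V // finrank F P = a ∧ q P}, f ⟨P.1, P.2.1⟩
      = ∑ᶠ P : Gr F V a, if q P.1 then f P else 0 := by
  classical
  rw [← finsum_comp_equiv
    (Equiv.subtypeSubtypeEquivSubtypeInter (fun P : Submodule F V => finrank F P = a) q)]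
  show ∑ᶠ x : {x : Gr F V a // q x.1}, f x.1 = _
  letI := Fintype.ofFinite (Submodule F V)
  letI : Fintype (Gr F V a) := Subtype.fintype _
  letI : Fintype {x : Gr F V a // q x.1} := Subtype.fintype _
  rw [finsum_eq_sum_of_fintype, finsum_eq_sum_of_fintype]
  rw [← Finset.sum_filter]
  exact (Finset.sum_subtype (Finset.univ.filter (fun P : Gr F V a => q P.1))
    (by simp) (fun P => f P)).symm

open scoped Classical in
lemma inc_eq (a b : ℕ) (f : Gr F V a → ℂ) (H : Gr F V b) :
    inc a b f H = ∑ᶠ P : Gr F V a, if P.1 ≤ H.1 then f P else 0 :=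
  finsum_split a (fun P => P ≤ (H : Submodule F V)) f

open scoped Classical in
lemma dec_eq (a b : ℕ) (f : Gr F V b → ℂ) (P : Gr F V a) :
    dec a b f P = ∑ᶠ H : Gr F V b, if P.1 ≤ H.1 then f H else 0 :=
  finsum_split b (fun H => (P : Submodule F V) ≤ H) f

open scoped Classical in
lemma double_swap {A B : Type*} [Finite A] [Finite B] (R : A → Prop) (S : A → B → Prop)
    (f : B → ℂ) :
    ∑ᶠ a : A, (if R a then ∑ᶠ b : B, (if S a b then f b else 0) else 0)
      = ∑ᶠ b : B, (Nat.card {a : A // R a ∧ S a b} : ℂ) * f b := by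
  classical
  letI := Fintype.ofFinite A
  letI := Fintype.ofFinite B
  simp only [finsum_eq_sum_of_fintype]
  have step1 : ∀ a : A, (if R a then ∑ b : B, (if S a b then f b else 0) else 0)
      = ∑ b : B, if R a ∧ S a b then f b else 0 := by
    intro a
    by_cases h : R a
    · simp [h]
    · simp [h]
  rw [Finset.sum_congr rfl (fun a _ => step1 a), Finset.sum_comm]
  refine Finset.sum_congr rfl (fun b _ => ?_)
  rw [← Finset.sum_filter, Finset.sum_const, nsmul_eq_mul, Nat.card_eq_fintype_card,
    Fintype.card_subtype]

lemma card_flat (j : ℕ) (cond : Submodule F V → Prop) :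
    Nat.card {K : Gr F V j // cond K.1}
      = Nat.card {K : Submodule F V // finrank F K = j ∧ cond K} :=
  Nat.card_congr (Equiv.subtypeSubtypeEquivSubtypeInter _ _)

open scoped Classical in
lemma comp_eq (r k : ℕ) (hrk : r ≤ k) (f : Gr F V r → ℂ) (H : Gr F V (k + 1)) :
    inc k (k + 1) (inc r k f) H = (Hc F (k + 1 - r) : ℂ) * inc r (k + 1) f H := by
  classical
  rw [inc_eq, inc_eq]
  have e1 : ∀ K : Gr F V k, (if K.1 ≤ H.1 then inc r k f K else 0)
      = (if K.1 ≤ H.1 then ∑ᶠ P : Gr F V r, (if P.1 ≤ K.1 then f P else 0) else 0) := by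
    intro K
    rw [inc_eq]
  rw [finsum_congr e1, double_swap (fun K : Gr F V k => K.1 ≤ H.1)
    (fun K P => P.1 ≤ K.1) f]
  have e2 : ∀ P : Gr F V r,
      ((Nat.card {K : Gr F V k // K.1 ≤ H.1 ∧ P.1 ≤ K.1} : ℂ) * f P)
        = (Hc F (k + 1 - r) : ℂ) * (if P.1 ≤ H.1 then f P else 0) := by
    intro P
    have hflat : Nat.card {K : Gr F V k // K.1 ≤ H.1 ∧ P.1 ≤ K.1}
        = Nat.card {K : Submodule F V // finrank F K = k ∧ (P.1 ≤ K ∧ K ≤ H.1)} := by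
      rw [card_flat k (fun K => K ≤ H.1 ∧ P.1 ≤ K)]
      exact Nat.card_congr (Equiv.subtypeEquivRight (fun K => by tauto))
    by_cases hP : P.1 ≤ H.1
    · rw [if_pos hP, hflat, card_interval P.1 H.1 hP k (by rw [P.2]; exact hrk)]
      rw [P.2, H.2, Hc, show k + 1 - r - 1 = k - r by omega]
    · rw [if_neg hP, mul_zero, hflat]
      haveI : IsEmpty {K : Submodule F V // finrank F K = k ∧ (P.1 ≤ K ∧ K ≤ H.1)} :=
        ⟨fun K => hP (le_trans K.2.2.1 K.2.2.2)⟩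
      rw [Nat.card_of_isEmpty]
      simp
  rw [finsum_congr e2]
  letI := Fintype.ofFinite (Submodule F V)
  letI : Fintype (Gr F V r) := Subtype.fintype _
  simp only [finsum_eq_sum_of_fintype]
  rw [Finset.mul_sum]

open scoped Classical in
lemma du_eq (m : ℕ) (hm : 1 ≤ m) (f : Gr F V m → ℂ) (P : Gr F V m) :
    dec m (m + 1) (inc m (m + 1) f) P
      = inc (m - 1) m (dec (m - 1) m f) P
        + ((Lc F (finrank F V - m) : ℂ) - (Lc F m : ℂ)) * f P := by
  classical
  set c : ℂ := (Lc F (finrank F V - m) : ℂ) - (Lc F m : ℂ) with hc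
  -- LHS
  rw [dec_eq]
  have e1 : ∀ H : Gr F V (m + 1), (if P.1 ≤ H.1 then inc m (m + 1) f H else 0)
      = (if P.1 ≤ H.1 then ∑ᶠ P' : Gr F V m, (if P'.1 ≤ H.1 then f P' else 0) else 0) := by
    intro H; rw [inc_eq]
  rw [finsum_congr e1, double_swap (fun H : Gr F V (m + 1) => P.1 ≤ H.1)
    (fun H P' => P'.1 ≤ H.1) f]
  -- first RHS term
  rw [inc_eq]
  have e2 : ∀ Q : Gr F V (m - 1), (if Q.1 ≤ P.1 then dec (m - 1) m f Q else 0)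
      = (if Q.1 ≤ P.1 then ∑ᶠ P' : Gr F V m, (if Q.1 ≤ P'.1 then f P' else 0) else 0) := by
    intro Q; rw [dec_eq]
  rw [finsum_congr e2, double_swap (fun Q : Gr F V (m - 1) => Q.1 ≤ P.1)
    (fun Q P' => Q.1 ≤ P'.1) f]
  -- pointwise comparison of the two counts
  have key : ∀ P' : Gr F V m,
      ((Nat.card {H : Gr F V (m + 1) // P.1 ≤ H.1 ∧ P'.1 ≤ H.1} : ℂ) * f P')
        = (Nat.card {Q : Gr F V (m - 1) // Q.1 ≤ P.1 ∧ Q.1 ≤ P'.1} : ℂ) * f P'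
          + (if P' = P then c * f P' else 0) := by
    intro P'
    have hA : Nat.card {H : Gr F V (m + 1) // P.1 ≤ H.1 ∧ P'.1 ≤ H.1}
        = Nat.card {H : Submodule F V //
            finrank F H = m + 1 ∧ (P.1 ⊔ P'.1 ≤ H ∧ H ≤ ⊤)} := by
      rw [card_flat (m + 1) (fun H => P.1 ≤ H ∧ P'.1 ≤ H)]
      refine Nat.card_congr (Equiv.subtypeEquivRight (fun H => ?_))
      constructor
      · rintro ⟨h1, h2, h3⟩; exact ⟨h1, sup_le h2 h3, le_top⟩
      · rintro ⟨h1, h2, -⟩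
        exact ⟨h1, le_trans le_sup_left h2, le_trans le_sup_right h2⟩
    have hB : Nat.card {Q : Gr F V (m - 1) // Q.1 ≤ P.1 ∧ Q.1 ≤ P'.1}
        = Nat.card {Q : Submodule F V //
            finrank F Q = m - 1 ∧ (⊥ ≤ Q ∧ Q ≤ P.1 ⊓ P'.1)} := by
      rw [card_flat (m - 1) (fun Q => Q ≤ P.1 ∧ Q ≤ P'.1)]
      refine Nat.card_congr (Equiv.subtypeEquivRight (fun Q => ?_))
      constructor
      · rintro ⟨h1, h2, h3⟩; exact ⟨h1, bot_le, le_inf h2 h3⟩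
      · rintro ⟨h1, -, h2⟩
        exact ⟨h1, le_trans h2 inf_le_left, le_trans h2 inf_le_right⟩
    by_cases hP' : P' = P
    · subst hP'
      rw [if_pos rfl]
      have hA2 : Nat.card {H : Submodule F V //
          finrank F H = m + 1 ∧ (P'.1 ⊔ P'.1 ≤ H ∧ H ≤ ⊤)} = Lc F (finrank F V - m) := by
        rw [show P'.1 ⊔ P'.1 = P'.1 by rw [sup_idem]]
        rw [card_interval P'.1 ⊤ le_top (m + 1) (by rw [P'.2]; omega)]
        rw [P'.2, finrank_top, Lc, show m + 1 - m = 1 by omega]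
      have hB2 : Nat.card {Q : Submodule F V //
          finrank F Q = m - 1 ∧ (⊥ ≤ Q ∧ Q ≤ P'.1 ⊓ P'.1)} = Lc F m := by
        rw [show P'.1 ⊓ P'.1 = P'.1 by rw [inf_idem]]
        rw [card_interval ⊥ P'.1 bot_le (m - 1) (by rw [finrank_bot]; omega)]
        rw [P'.2, finrank_bot]
        simp only [Nat.sub_zero]
        rw [← Hc, Hc_eq_Lc hm]
      rw [hA, hB, hA2, hB2, hc]
      ring
    · rw [if_neg hP', add_zero, hA, hB]
      have hPne : P.1 ≠ P'.1 := fun h => hP' (Subtype.ext h.symm)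
      have hsum := Submodule.finrank_sup_add_finrank_inf_eq P.1 P'.1
      rw [P.2, P'.2] at hsum
      have htlt : finrank F ↥(P.1 ⊓ P'.1) < m := by
        rcases lt_or_eq_of_le (Submodule.finrank_mono (inf_le_left : P.1 ⊓ P'.1 ≤ P.1)) with h | h
        · rw [P.2] at h; exact h
        · exfalso
          have hinf : P.1 ⊓ P'.1 = P.1 :=
            Submodule.eq_of_le_of_finrank_le inf_le_left (by rw [h])
          have hle : P.1 ≤ P'.1 := inf_eq_left.mp hinf
          exact hPne (Submodule.eq_of_le_of_finrank_le hle (by rw [P.2, P'.2]))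
      by_cases ht : finrank F ↥(P.1 ⊓ P'.1) = m - 1
      · have hs : finrank F ↥(P.1 ⊔ P'.1) = m + 1 := by omega
        have hA3 : Nat.card {H : Submodule F V //
            finrank F H = m + 1 ∧ (P.1 ⊔ P'.1 ≤ H ∧ H ≤ ⊤)} = 1 := by
          rw [card_interval (P.1 ⊔ P'.1) ⊤ le_top (m + 1) (by rw [hs]), hs, Nat.sub_self]
          exact cnt_zero
        have hB3 : Nat.card {Q : Submodule F V //
            finrank F Q = m - 1 ∧ (⊥ ≤ Q ∧ Q ≤ P.1 ⊓ P'.1)} = 1 := by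
          rw [card_interval ⊥ (P.1 ⊓ P'.1) bot_le (m - 1) (by rw [finrank_bot]; omega)]
          rw [ht, finrank_bot]
          simp only [Nat.sub_zero]
          have h4 := cnt_full (F := F) (W := Fin (m - 1) → F)
          rwa [Module.finrank_fin_fun] at h4
        rw [hA3, hB3]
      · have hs : m + 1 < finrank F ↥(P.1 ⊔ P'.1) := by omega
        rw [card_zero_of_lt (P.1 ⊔ P'.1) ⊤ (m + 1) hs,
          card_zero_of_gt ⊥ (P.1 ⊓ P'.1) (m - 1) (by omega)]
  rw [finsum_congr key]
  letI := Fintype.ofFinite (Submodule F V)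
  letI : Fintype (Gr F V m) := Subtype.fintype _
  simp only [finsum_eq_sum_of_fintype]
  rw [Finset.sum_add_distrib, Finset.sum_ite_eq' Finset.univ P (fun P' => c * f P')]
  simp

open scoped Classical in
lemma adjoint_eq (m : ℕ) (g : Gr F V (m - 1) → ℂ) (f : Gr F V m → ℂ) :
    ∑ᶠ P : Gr F V m, inc (m - 1) m g P * (starRingEnd ℂ) (f P)
      = ∑ᶠ Q : Gr F V (m - 1), g Q * (starRingEnd ℂ) (dec (m - 1) m f Q) := by
  classical
  letI := Fintype.ofFinite (Submodule F V)
  letI : Fintype (Gr F V m) := Subtype.fintype _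
  letI : Fintype (Gr F V (m - 1)) := Subtype.fintype _
  simp only [inc_eq, dec_eq, finsum_eq_sum_of_fintype]
  simp only [Finset.sum_mul, ite_mul, zero_mul, map_sum, apply_ite (starRingEnd ℂ), map_zero,
    Finset.mul_sum, mul_ite, mul_zero]
  rw [Finset.sum_comm]

lemma inc_zero (a b : ℕ) (H : Gr F V b) : inc a b (fun _ => (0 : ℂ)) H = 0 := by
  rw [inc]
  exact finsum_eq_zero_of_forall_eq_zero (fun P => rfl)

lemma inc_sub (a b : ℕ) (f g : Gr F V a → ℂ) (H : Gr F V b) :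
    inc a b (fun P => f P - g P) H = inc a b f H - inc a b g H := by
  rw [inc, inc, inc]
  exact finsum_sub_distrib (Set.toFinite _) (Set.toFinite _)

lemma inc_self (r : ℕ) (f : Gr F V r → ℂ) (H : Gr F V r) : inc r r f H = f H := by
  letI : Unique {P : Submodule F V // finrank F P = r ∧ P ≤ (H : Submodule F V)} :=
    { default := ⟨H.1, H.2, le_rfl⟩
      uniq := fun P => Subtype.ext
        (Submodule.eq_of_le_of_finrank_le P.2.2 (le_of_eq (by
          show finrank F (H : Submodule F V) = finrank F P.1
          rw [P.2.1, H.2]))) }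
  rw [inc, finsum_unique]
  exact congrArg f (Subtype.ext (by rfl))

open scoped Classical in
lemma step_zero (m : ℕ) (hm : 1 ≤ m) (hmn : 2 * (m + 1) ≤ finrank F V)
    (f : Gr F V m → ℂ) (h : ∀ H, inc m (m + 1) f H = 0) : ∀ P, f P = 0 := by
  classical
  letI := Fintype.ofFinite (Submodule F V)
  letI : Fintype (Gr F V m) := Subtype.fintype _
  letI : Fintype (Gr F V (m - 1)) := Subtype.fintype _
  set g := dec (m - 1) m f with hg
  set c : ℂ := (Lc F (finrank F V - m) : ℂ) - (Lc F m : ℂ) with hc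
  have key : ∀ P, inc (m - 1) m g P + c * f P = 0 := by
    intro P
    rw [← du_eq m hm f P, dec]
    exact finsum_eq_zero_of_forall_eq_zero (fun H => h _)
  have hsum0 : ∑ P : Gr F V m, (inc (m - 1) m g P + c * f P) * (starRingEnd ℂ) (f P) = 0 :=
    Finset.sum_eq_zero (fun P _ => by rw [key P, zero_mul])
  have hadj := adjoint_eq m g f
  simp only [finsum_eq_sum_of_fintype] at hadj
  have hexp : (∑ Q : Gr F V (m - 1), g Q * (starRingEnd ℂ) (g Q))
      + c * ∑ P : Gr F V m, f P * (starRingEnd ℂ) (f P) = 0 := by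
    rw [← hsum0]
    simp only [add_mul, Finset.sum_add_distrib]
    congr 1
    · rw [hadj, hg]
    · rw [Finset.mul_sum]
      exact Finset.sum_congr rfl (fun P _ => by ring)
  simp only [Complex.mul_conj] at hexp
  have hA : (0 : ℝ) ≤ ∑ Q : Gr F V (m - 1), Complex.normSq (g Q) :=
    Finset.sum_nonneg (fun Q _ => Complex.normSq_nonneg _)
  have hB : (0 : ℝ) ≤ ∑ P : Gr F V m, Complex.normSq (f P) :=
    Finset.sum_nonneg (fun P _ => Complex.normSq_nonneg _)
  have hL : (Lc F m : ℝ) < (Lc F (finrank F V - m) : ℝ) := by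
    have := Lc_strict_mono (F := F) (show m < finrank F V - m by omega)
    exact_mod_cast this
  have hreal : (∑ Q : Gr F V (m - 1), Complex.normSq (g Q))
      + ((Lc F (finrank F V - m) : ℝ) - (Lc F m : ℝ))
        * ∑ P : Gr F V m, Complex.normSq (f P) = 0 := by
    rw [← Complex.ofReal_eq_zero]
    push_cast
    rw [hc] at hexp
    push_cast at hexp
    linear_combination hexp
  have hB0 : ∑ P : Gr F V m, Complex.normSq (f P) = 0 := by nlinarith
  intro P
  have := (Finset.sum_eq_zero_iff_of_nonneg
    (fun P _ => Complex.normSq_nonneg (f P))).mp hB0 P (Finset.mem_univ P)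
  exact Complex.normSq_eq_zero.mp this

lemma inc_injective (r : ℕ) (hr : 1 ≤ r) : ∀ k, r ≤ k → 2 * k ≤ finrank F V →
    Function.Injective (inc (F := F) (V := V) r k) := by
  intro k hrk
  induction k, hrk using Nat.le_induction with
  | base =>
    intro _ f g hfg
    funext H
    have := congrFun hfg H
    rwa [inc_self, inc_self] at this
  | succ k hk' IH =>
    intro h2 f g hfg
    have hdiff : ∀ H, inc r (k + 1) (fun P => f P - g P) H = 0 := by
      intro H
      rw [inc_sub, congrFun hfg H, sub_self]
    have hcomp : ∀ H, inc k (k + 1) (inc r k (fun P => f P - g P)) H = 0 := by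
      intro H
      rw [comp_eq r k hk' _ H, hdiff H, mul_zero]
    have hzero : ∀ K, inc r k (fun P => f P - g P) K = 0 :=
      step_zero k (by omega) h2 (inc r k fun P => f P - g P) hcomp
    have h3 := IH (by omega)
      (funext (fun K => by rw [hzero K, inc_zero]) :
        inc r k (fun P => f P - g P) = inc r k (fun _ => 0))
    funext P
    have := congrFun h3 P
    simpa [sub_eq_zero] using this

end ops

end Stmt4Aux

theorem stmt4 {F V : Type*} [Field F] [Fintype F] [AddCommGroup V] [Module F V]
    [FiniteDimensional F V] (n r k : ℕ) (hn : Module.finrank F V = n)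
    (hr : 1 ≤ r) (hrk : r ≤ k) (hk : 2 * k ≤ n) :
    Function.Injective
      (fun (f : {P : Submodule F V // Module.finrank F P = r} → ℂ)
           (H : {H : Submodule F V // Module.finrank F H = k}) =>
        ∑ᶠ P : {P : Submodule F V // Module.finrank F P = r ∧ P ≤ (H : Submodule F V)},
          f ⟨P.1, P.2.1⟩) := by
  exact Stmt4Aux.inc_injective r hr k hrk (by rw [hn]; exact hk)
end

section
/- Let V be an n-dimensional vector space over a field, let 1 ≤ r ≤ k ≤ n/2, and let 0 ≤ i ≤ r. Given two r-dimensional subspaces P_0 and P of V with dim(P ∩ P_0) = i, there exists a k-dimensional subspace H of V with P_0 ⊆ H and dim(P ∩ H) = i. -/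
/-!
Grow `P₀` by a subspace `D` meeting `P ⊔ P₀` trivially: by the modular law `P ⊓ (P₀ ⊔ D) = P ⊓ P₀`,
and `D` can have any dimension up to `n - dim (P ⊔ P₀) = n - 2r + i`, which is at least `k - r`
because `k + r ≤ 2k ≤ n`.
-/

open Module

theorem inf_sup_eq_inf_of_disjoint_sup {α : Type*} [Lattice α] [OrderBot α] [IsModularLattice α]
    {a b c : α} (h : Disjoint (a ⊔ b) c) : a ⊓ (b ⊔ c) = a ⊓ b := by
  refine le_antisymm (le_inf inf_le_left ?_) (inf_le_inf_left a le_sup_left)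
  calc a ⊓ (b ⊔ c) ≤ (b ⊔ c) ⊓ (b ⊔ a) := by rw [inf_comm]; exact inf_le_inf_left _ le_sup_right
    _ = b ⊔ c ⊓ (b ⊔ a) := sup_inf_assoc_of_le c le_sup_left
    _ = b := by rw [sup_comm b a, h.symm.eq_bot, sup_bot_eq]

namespace Submodule

variable {K V : Type*} [DivisionRing K] [AddCommGroup V] [Module K V]

theorem exists_le_finrank_eq_of_le_finrank (C : Submodule K V) {d : ℕ} (hd : d ≤ finrank K C) :
    ∃ D ≤ C, finrank K D = d := by
  obtain ⟨f, hf⟩ := exists_linearIndependent_of_le_finrank hd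
  refine ⟨span K (Set.range (C.subtype ∘ f)), ?_, ?_⟩
  · rw [span_le, Set.range_comp]
    rintro _ ⟨x, -, rfl⟩
    exact x.2
  · rw [finrank_span_eq_card (hf.map' C.subtype C.ker_subtype), Fintype.card_fin]

variable [FiniteDimensional K V]

theorem exists_disjoint_finrank_eq (W : Submodule K V) {d : ℕ}
    (hd : d + finrank K W ≤ finrank K V) : ∃ D, Disjoint W D ∧ finrank K D = d := by
  obtain ⟨C, hC⟩ := W.exists_isCompl
  obtain ⟨D, hDC, hD⟩ := C.exists_le_finrank_eq_of_le_finrank (d := d)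
    (by have := finrank_add_eq_of_isCompl hC; omega)
  exact ⟨D, hC.disjoint.mono_right hDC, hD⟩

theorem exists_le_finrank_eq_inf_eq (P H₀ : Submodule K V) {d : ℕ}
    (hd : d + finrank K (P ⊔ H₀ : Submodule K V) ≤ finrank K V) :
    ∃ H, H₀ ≤ H ∧ finrank K H = finrank K H₀ + d ∧ P ⊓ H = P ⊓ H₀ := by
  obtain ⟨D, hdisj, hD⟩ := (P ⊔ H₀).exists_disjoint_finrank_eq hd
  have hH₀D : H₀ ⊓ D = ⊥ := (hdisj.mono_left le_sup_right).eq_bot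
  refine ⟨H₀ ⊔ D, le_sup_left, ?_, inf_sup_eq_inf_of_disjoint_sup hdisj⟩
  have := finrank_sup_add_finrank_inf_eq H₀ D
  rw [hH₀D, finrank_bot] at this
  omega

end Submodule

theorem stmt6_general {K V : Type*} [Field K] [AddCommGroup V] [Module K V]
    [FiniteDimensional K V] (n r k i : ℕ) (hn : Module.finrank K V = n)
    (hrk : r ≤ k) (hk : 2 * k ≤ n)
    (P P₀ : Submodule K V)
    (hP : Module.finrank K P = r) (hP₀ : Module.finrank K P₀ = r)
    (hi : Module.finrank K (P ⊓ P₀ : Submodule K V) = i) :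
    ∃ H : Submodule K V, Module.finrank K H = k ∧ P₀ ≤ H ∧
      Module.finrank K (P ⊓ H : Submodule K V) = i := by
  have hsup := Submodule.finrank_sup_add_finrank_inf_eq P P₀
  obtain ⟨H, hP₀H, hH, hPH⟩ := P.exists_le_finrank_eq_inf_eq P₀ (d := k - r) (by omega)
  exact ⟨H, by omega, hP₀H, hPH ▸ hi⟩

theorem stmt6 {K V : Type*} [Field K] [AddCommGroup V] [Module K V]
    [FiniteDimensional K V] (n r k i : ℕ) (hn : Module.finrank K V = n)
    (hr : 1 ≤ r) (hrk : r ≤ k) (hk : 2 * k ≤ n) (hir : i ≤ r)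
    (P P₀ : Submodule K V)
    (hP : Module.finrank K P = r) (hP₀ : Module.finrank K P₀ = r)
    (hi : Module.finrank K (P ⊓ P₀ : Submodule K V) = i) :
    ∃ H : Submodule K V, Module.finrank K H = k ∧ P₀ ≤ H ∧
      Module.finrank K (P ⊓ H : Submodule K V) = i :=
  stmt6_general n r k i hn hrk hk P P₀ hP hP₀ hi
end

section
/- Let g be an invertible linear endomorphism of an n-dimensional vector space V over an algebraically closed field, and suppose g is diagonalizable. Let 1 ≤ j, k ≤ n-1 with j(n-j) ≤ k(n-k). Then the dimension of the variety of g-invariant j-dimensional subspaces of V is at most the dimension of the variety of g-invariant k-dimensional subspaces of V. In particular, if g has eigenspace decomposition with eigenspace dimensions m_1,...,m_s, the fixed-point set G(j,V)_g is the disjoint union over tuples (j_1,...,j_s) with Σ j_t = j, 0 ≤ j_t ≤ m_t, of products of Grassmannians Π_t G(j_t, m_t), and its dimension is max over such tuples of Σ_t j_t(m_t - j_t). -/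
open Polynomial Finset

section helpers

variable {K V : Type*} [Field K] [AddCommGroup V] [Module K V]

private lemma pow_eig (f : Module.End K V) (μ : K) (x : V) (hx : f x = μ • x) :
    ∀ q : ℕ, (f ^ q) x = μ ^ q • x
  | 0 => by simp
  | q + 1 => by
    rw [pow_succ, Module.End.mul_apply, hx, map_smul, pow_eig f μ x hx q, pow_succ, mul_comm,
      mul_smul]

private lemma aeval_eig (f : Module.End K V) (μ : K) (x : V) (hx : f x = μ • x)
    (p : K[X]) : (Polynomial.aeval f p) x = p.eval μ • x := by
  induction p using Polynomial.induction_on' with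
  | add p q hp hq => simp [hp, hq, add_smul]
  | monomial q a =>
    rw [Polynomial.aeval_monomial, Polynomial.eval_monomial, Module.End.mul_apply,
      pow_eig f μ x hx q, map_smul, Module.algebraMap_end_apply, mul_smul]
    exact smul_comm _ _ _

private lemma pow_mem_inv (f : Module.End K V) (W : Submodule K V)
    (hW : ∀ x ∈ W, f x ∈ W) : ∀ (q : ℕ) (x : V), x ∈ W → (f ^ q) x ∈ W
  | 0, x, hx => by simpa using hx
  | q + 1, x, hx => by
    rw [pow_succ, Module.End.mul_apply]
    exact pow_mem_inv f W hW q _ (hW x hx)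

private lemma aeval_mem_inv (f : Module.End K V) (W : Submodule K V)
    (hW : ∀ x ∈ W, f x ∈ W) (p : K[X]) (x : V) (hx : x ∈ W) :
    (Polynomial.aeval f p) x ∈ W := by
  induction p using Polynomial.induction_on' with
  | add p q hp hq => simpa using W.add_mem hp hq
  | monomial q a =>
    rw [Polynomial.aeval_monomial, Module.End.mul_apply, Module.algebraMap_end_apply]
    exact W.smul_mem _ (pow_mem_inv f W hW q x hx)

end helpers

private lemma sum_update_succ {s : ℕ} (c : Fin s → ℕ) (t : Fin s) :
    ∑ r, Function.update c t (c t + 1) r = (∑ r, c r) + 1 := by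
  rw [Finset.sum_update_of_mem (Finset.mem_univ t), Finset.sdiff_singleton_eq_erase,
    ← Finset.add_sum_erase _ c (Finset.mem_univ t)]
  omega

/-- The set of achievable dimensions. -/
private def Sset {s : ℕ} (m : Fin s → ℕ) (j : ℕ) : Set ℕ :=
  {d : ℕ | ∃ c : Fin s → ℕ, (∀ t, c t ≤ m t) ∧ (∑ t, c t = j) ∧
      d = ∑ t, c t * (m t - c t)}

private lemma Sset_bdd {s : ℕ} (m : Fin s → ℕ) (j : ℕ) : BddAbove (Sset m j) := by
  refine ⟨∑ t, m t * m t, fun d hd => ?_⟩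
  obtain ⟨c, hc, -, rfl⟩ := hd
  exact Finset.sum_le_sum fun t _ => Nat.mul_le_mul (hc t) (Nat.sub_le _ _)

private lemma Sset_nonempty {s : ℕ} (m : Fin s → ℕ) :
    ∀ j, j ≤ ∑ t, m t → (Sset m j).Nonempty
  | 0, _ => ⟨∑ t, (0 : ℕ) * (m t - 0), 0, fun t => Nat.zero_le _, by simp, rfl⟩
  | j + 1, h => by
    obtain ⟨d, c, hc, hs, rfl⟩ := Sset_nonempty m j (by omega)
    have hex : ∃ t, c t < m t := by
      by_contra hcon
      push_neg at hcon
      have : ∑ t, m t ≤ ∑ t, c t := Finset.sum_le_sum fun t _ => hcon t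
      omega
    obtain ⟨t, ht⟩ := hex
    refine ⟨_, Function.update c t (c t + 1), fun r => ?_, ?_, rfl⟩
    · rcases eq_or_ne r t with rfl | hr
      · simpa using ht
      · simp [Function.update_of_ne hr, hc r]
    · rw [sum_update_succ, hs]

private lemma mul_step (c mm : ℕ) (h : 2 * c + 1 ≤ mm) :
    c * (mm - c) ≤ (c + 1) * (mm - (c + 1)) := by
  obtain ⟨a, ha1, ha2⟩ : ∃ a, mm = c + 1 + a ∧ c ≤ a := ⟨mm - c - 1, by omega, by omega⟩
  subst ha1
  have h1 : c + 1 + a - c = 1 + a := by omega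
  have h2 : c + 1 + a - (c + 1) = a := by omega
  rw [h1, h2]
  nlinarith

private lemma improve {s : ℕ} (m : Fin s → ℕ) (k : ℕ) (hk : 2 * k ≤ ∑ t, m t) :
    ∀ (d : ℕ) (c : Fin s → ℕ), (∀ t, c t ≤ m t) → (∑ t, c t) + d = k →
    ∃ c' : Fin s → ℕ, (∀ t, c' t ≤ m t) ∧ (∑ t, c' t = k) ∧
      ∑ t, c t * (m t - c t) ≤ ∑ t, c' t * (m t - c' t)
  | 0, c, hc, hs => ⟨c, hc, by omega, le_rfl⟩
  | d + 1, c, hc, hs => by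
    have hex : ∃ t, 2 * c t + 1 ≤ m t := by
      by_contra h
      push_neg at h
      have h2 : ∑ t, m t ≤ ∑ t, 2 * c t :=
        Finset.sum_le_sum fun t _ => by have := h t; omega
      rw [← Finset.mul_sum] at h2
      omega
    obtain ⟨t, ht⟩ := hex
    have hsum : ∑ r, Function.update c t (c t + 1) r = (∑ r, c r) + 1 :=
      sum_update_succ c t
    obtain ⟨c', h1, h2, h3⟩ := improve m k hk d (Function.update c t (c t + 1))
      (fun r => by
        rcases eq_or_ne r t with rfl | hr
        · simp only [Function.update_self]; omega
        · simp [Function.update_of_ne hr, hc r])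
      (by omega)
    refine ⟨c', h1, h2, le_trans (Finset.sum_le_sum fun r _ => ?_) h3⟩
    rcases eq_or_ne r t with rfl | hr
    · simpa using mul_step (c r) (m r) ht
    · simp [Function.update_of_ne hr]

private lemma Sset_subset_symm {s : ℕ} (m : Fin s → ℕ) (j : ℕ) :
    Sset m j ⊆ Sset m ((∑ t, m t) - j) := by
  rintro d ⟨c, hc, hs, rfl⟩
  refine ⟨fun t => m t - c t, fun t => Nat.sub_le _ _, ?_, ?_⟩
  · show (∑ t, (m t - c t)) = (∑ t, m t) - j
    have h1 : ∑ t, (c t + (m t - c t)) = ∑ t, m t :=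
      Finset.sum_congr rfl fun t _ => by have := hc t; omega
    rw [Finset.sum_add_distrib] at h1
    omega
  · show (∑ t, c t * (m t - c t)) = ∑ t, (m t - c t) * (m t - (m t - c t))
    refine Finset.sum_congr rfl fun t _ => ?_
    rw [Nat.sub_sub_self (hc t), mul_comm]

private lemma Sset_symm {s : ℕ} (m : Fin s → ℕ) (j : ℕ) (hj : j ≤ ∑ t, m t) :
    Sset m j = Sset m ((∑ t, m t) - j) := by
  refine le_antisymm (Sset_subset_symm m j) ?_
  have := Sset_subset_symm m ((∑ t, m t) - j)
  rwa [Nat.sub_sub_self hj] at this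

private lemma F_mono {s : ℕ} (m : Fin s → ℕ) (j k : ℕ) (hjk : j ≤ k)
    (hk : 2 * k ≤ ∑ t, m t) : sSup (Sset m j) ≤ sSup (Sset m k) := by
  obtain ⟨d, hd⟩ := Sset_nonempty m j (by omega)
  refine csSup_le ⟨d, hd⟩ fun e he => ?_
  obtain ⟨c, hc, hs, rfl⟩ := he
  obtain ⟨c', h1, h2, h3⟩ := improve m k hk (k - j) c hc (by omega)
  exact le_trans h3 (le_csSup (Sset_bdd m k) ⟨c', h1, h2, rfl⟩)

private lemma strict_prod (n x y : ℕ) (hxy : x < y) (hy : 2 * y ≤ n) :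
    x * (n - x) < y * (n - y) := by
  obtain ⟨dd, hd1, hd2⟩ : ∃ dd, n - y = dd ∧ x < dd := ⟨n - y, rfl, by omega⟩
  obtain ⟨a, ha1, ha2⟩ : ∃ a, y = x + a ∧ 1 ≤ a := ⟨y - x, by omega, by omega⟩
  have h1 : n - x = dd + a := by omega
  rw [h1, hd1, ha1]
  nlinarith

theorem stmt11 {K V : Type*} [Field K] [IsAlgClosed K] [AddCommGroup V] [Module K V]
    [FiniteDimensional K V] (n s j k : ℕ) (hn : Module.finrank K V = n)
    (g : V ≃ₗ[K] V) (μ : Fin s → K) (hμ : Function.Injective μ) (m : Fin s → ℕ)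
    (hm : ∑ t, m t = n)
    -- the eigenspace of `g` for `μ t` has dimension `m t`
    (hes : ∀ t, Module.finrank K
      (LinearMap.ker ((g : V →ₗ[K] V) - μ t • (1 : Module.End K V))) = m t)
    -- `g` is diagonalizable: the eigenspaces span `V`
    (hdiag : (⨆ t, LinearMap.ker ((g : V →ₗ[K] V) - μ t • (1 : Module.End K V))) = ⊤)
    (hj1 : 1 ≤ j) (hj2 : j ≤ n - 1) (hk1 : 1 ≤ k) (hk2 : k ≤ n - 1)
    (hjk : j * (n - j) ≤ k * (n - k)) :
    -- every `g`-invariant subspace is the direct sum of its intersections with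
    -- the eigenspaces of `g`, ...
    (∀ W : Submodule K V, Submodule.map (g : V →ₗ[K] V) W = W →
      W = ⨆ t, W ⊓ LinearMap.ker ((g : V →ₗ[K] V) - μ t • (1 : Module.End K V))) ∧
    -- subspaces, which is the maximum of `∑ t, j_t * (m_t - j_t)` over tuples
    -- `(j_t)` with `∑ t, j_t = j` and `j_t ≤ m_t`, is at most that for `k`
    sSup {d : ℕ | ∃ c : Fin s → ℕ, (∀ t, c t ≤ m t) ∧ (∑ t, c t = j) ∧
        d = ∑ t, c t * (m t - c t)} ≤
      sSup {d : ℕ | ∃ c : Fin s → ℕ, (∀ t, c t ≤ m t) ∧ (∑ t, c t = k) ∧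
        d = ∑ t, c t * (m t - c t)} := by
  constructor
  · -- Part 1: invariant subspaces decompose
    intro W hW
    set f : Module.End K V := (g : V →ₗ[K] V) with hf
    have hWinv : ∀ x ∈ W, f x ∈ W := fun x hx => hW ▸ Submodule.mem_map_of_mem hx
    refine le_antisymm ?_ (iSup_le fun t => inf_le_left)
    intro w hw
    have hwsup : w ∈ ⨆ t, LinearMap.ker (f - μ t • (1 : Module.End K V)) := by
      rw [hdiag]; trivial
    rw [Submodule.mem_iSup_iff_exists_finsupp] at hwsup
    obtain ⟨v, hv, hvsum⟩ := hwsup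
    have hvsum' : ∑ t, v t = w := by
      rw [← hvsum, Finsupp.sum_fintype]
      simp
    have heig : ∀ t, f (v t) = μ t • v t := by
      intro t
      have := hv t
      rw [LinearMap.mem_ker, LinearMap.sub_apply] at this
      rw [← sub_eq_zero]
      simpa using this
    have hvW : ∀ t, v t ∈ W := by
      intro t
      have hinj : Set.InjOn μ (Finset.univ : Finset (Fin s)) := fun a _ b _ h => hμ h
      set P : K[X] := Lagrange.basis Finset.univ μ t with hP
      have hPw : (Polynomial.aeval f P) w = v t := by
        rw [← hvsum', map_sum]
        have : ∀ r ∈ Finset.univ, (Polynomial.aeval f P) (v r) =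
            (if r = t then (1 : K) else 0) • v r := by
          intro r _
          rw [aeval_eig f (μ r) (v r) (heig r)]
          rcases eq_or_ne r t with hr | hr
          · rw [hr, if_pos rfl, hP, Lagrange.eval_basis_self hinj (Finset.mem_univ t)]
          · rw [if_neg hr, hP, Lagrange.eval_basis_of_ne (fun h => hr h.symm) (Finset.mem_univ r)]
        rw [Finset.sum_congr rfl this]
        simp
      rw [← hPw]
      exact aeval_mem_inv f W hWinv P w hw
    rw [← hvsum']
    refine Submodule.sum_mem _ fun t _ => ?_
    exact Submodule.mem_iSup_of_mem t (Submodule.mem_inf.2 ⟨hvW t, hv t⟩)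
  · -- Part 2: combinatorics
    subst hm
    set N := ∑ t, m t with hN
    show sSup (Sset m j) ≤ sSup (Sset m k)
    set j' := min j (N - j) with hj'
    set k' := min k (N - k) with hk'
    have hN2 : 2 ≤ N := by omega
    have hjN : j ≤ N := by omega
    have hkN : k ≤ N := by omega
    have h2j : 2 * j' ≤ N := by omega
    have h2k : 2 * k' ≤ N := by omega
    have hpj : j * (N - j) = j' * (N - j') := by
      rcases le_total j (N - j) with h | h
      · rw [hj', min_eq_left h]
      · rw [hj', min_eq_right h]
        have : N - (N - j) = j := by omega
        rw [this, mul_comm]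
    have hpk : k * (N - k) = k' * (N - k') := by
      rcases le_total k (N - k) with h | h
      · rw [hk', min_eq_left h]
      · rw [hk', min_eq_right h]
        have : N - (N - k) = k := by omega
        rw [this, mul_comm]
    have hjk' : j' ≤ k' := by
      by_contra hcon
      push_neg at hcon
      have := strict_prod N k' j' hcon h2j
      rw [← hpj, ← hpk] at this
      omega
    have hSj : Sset m j = Sset m j' := by
      rcases le_total j (N - j) with h | h
      · rw [hj', min_eq_left h]
      · rw [hj', min_eq_right h]
        exact Sset_symm m j hjN
    have hSk : Sset m k = Sset m k' := by
      rcases le_total k (N - k) with h | h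
      · rw [hk', min_eq_left h]
      · rw [hk', min_eq_right h]
        exact Sset_symm m k hkN
    rw [hSj, hSk]
    exact F_mono m j' k' hjk' h2k
end

section
/- Let V be an n-dimensional vector space over a finite field, 1 ≤ r ≤ k ≤ n/2. Define the r×r-indexed matrix A with entries a_{i,j} (0 ≤ i,j ≤ r), where a_{i,j} is the number of k-dimensional subspaces H containing a fixed r-dimensional subspace P_0 such that dim(P ∩ H) = j, for any fixed r-dimensional subspace P with dim(P ∩ P_0) = i (this count is independent of the choice of P and P_0). Then A is upper triangular with nonzero diagonal entries, hence invertible over ℚ. -/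
theorem stmt18 {F V : Type*} [Field F] [Fintype F] [AddCommGroup V] [Module F V]
    [FiniteDimensional F V] (n r k : ℕ) (hn : Module.finrank F V = n)
    (hr : 1 ≤ r) (hrk : r ≤ k) (hk : 2 * k ≤ n)
    (P₀ : Submodule F V) (hP₀ : Module.finrank F P₀ = r)
    (P : Fin (r + 1) → Submodule F V)
    (hP : ∀ i : Fin (r + 1), Module.finrank F (P i) = r)
    (hPi : ∀ i : Fin (r + 1), Module.finrank F (P i ⊓ P₀ : Submodule F V) = (i : ℕ))
    (A : Matrix (Fin (r + 1)) (Fin (r + 1)) ℚ)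
    (hA : ∀ i j : Fin (r + 1), A i j =
      (Nat.card {H : Submodule F V // Module.finrank F H = k ∧ P₀ ≤ H ∧
        Module.finrank F (P i ⊓ H : Submodule F V) = (j : ℕ)} : ℚ)) :
    (∀ i j : Fin (r + 1), (j : ℕ) < (i : ℕ) → A i j = 0) ∧
      (∀ i : Fin (r + 1), A i i ≠ 0) ∧ IsUnit A.det := by
  have hVfin : Finite V := Module.finite_of_finite F
  have hSubFin : Finite (Submodule F V) :=
    Finite.of_injective (fun s => (s : Set V)) SetLike.coe_injective
  -- Part 1: lower entries vanish
  have h1 : ∀ i j : Fin (r + 1), (j : ℕ) < (i : ℕ) → A i j = 0 := by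
    intro i j hij
    rw [hA i j]
    have : IsEmpty {H : Submodule F V // Module.finrank F H = k ∧ P₀ ≤ H ∧
        Module.finrank F (P i ⊓ H : Submodule F V) = (j : ℕ)} := by
      constructor
      rintro ⟨H, -, hPH, hdim⟩
      have hle : (P i ⊓ P₀ : Submodule F V) ≤ P i ⊓ H := inf_le_inf_left _ hPH
      have := Submodule.finrank_mono hle
      rw [hPi i, hdim] at this
      omega
    rw [Nat.card_of_isEmpty]
    norm_num
  -- Part 2: diagonal entries nonzero
  have h2 : ∀ i : Fin (r + 1), A i i ≠ 0 := by
    intro i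
    rw [hA i i]
    have hi_le : (i : ℕ) ≤ r := Nat.lt_succ_iff.mp i.isLt
    set W : Submodule F V := P i ⊔ P₀ with hW
    have hWdim : Module.finrank F W + (i : ℕ) = 2 * r := by
      have := Submodule.finrank_sup_add_finrank_inf_eq (P i) P₀
      rw [hPi i, hP i, hP₀, ← hW] at this
      omega
    obtain ⟨D, hD⟩ := W.exists_isCompl
    have hDdim : Module.finrank F W + Module.finrank F D = n := by
      rw [← hn]; exact Submodule.finrank_add_eq_of_isCompl hD
    have hkr : k - r ≤ Module.finrank F D := by omega
    obtain ⟨f, hfli⟩ := exists_linearIndependent_of_le_finrank (M := D) hkr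
    set v : Fin (k - r) → V := fun x => (f x : V) with hv
    have hvli : LinearIndependent F v := by
      have := hfli.map' D.subtype (Submodule.ker_subtype D)
      exact this
    set C : Submodule F V := Submodule.span F (Set.range v) with hC
    have hCdim : Module.finrank F C = k - r := by
      rw [hC, finrank_span_eq_card hvli, Fintype.card_fin]
    have hCD : C ≤ D := by
      rw [hC, Submodule.span_le]
      rintro x ⟨y, rfl⟩
      exact (f y).2
    -- the witness
    set H : Submodule F V := P₀ ⊔ C with hHdef
    have hdisj : Disjoint P₀ C :=
      Disjoint.mono le_sup_right hCD hD.disjoint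
    have hHdim : Module.finrank F H = k := by
      have := Submodule.finrank_sup_add_finrank_inf_eq P₀ C
      rw [hdisj.eq_bot, finrank_bot, hP₀, hCdim, ← hHdef] at this
      omega
    have hinter : (P i ⊓ H : Submodule F V) = P i ⊓ P₀ := by
      apply le_antisymm
      · rintro x ⟨hx1, hx2⟩
        obtain ⟨p, hp, c, hc, rfl⟩ := Submodule.mem_sup.mp hx2
        have hcW : c ∈ W := by
          have hpW : p ∈ W := le_sup_right (α := Submodule F V) hp
          have hxW : p + c ∈ W := le_sup_left (α := Submodule F V) hx1
          simpa using W.sub_mem hxW hpW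
        have hcD : c ∈ D := hCD hc
        have : c ∈ (⊥ : Submodule F V) := hD.disjoint.le_bot ⟨hcW, hcD⟩
        rw [Submodule.mem_bot] at this
        subst this
        exact ⟨by simpa using hx1, by simpa using hp⟩
      · exact inf_le_inf_left _ le_sup_left
    have : Nonempty {H : Submodule F V // Module.finrank F H = k ∧ P₀ ≤ H ∧
        Module.finrank F (P i ⊓ H : Submodule F V) = (i : ℕ)} :=
      ⟨⟨H, hHdim, le_sup_left, by rw [hinter, hPi i]⟩⟩
    have hpos : 0 < Nat.card {H : Submodule F V // Module.finrank F H = k ∧ P₀ ≤ H ∧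
        Module.finrank F (P i ⊓ H : Submodule F V) = (i : ℕ)} := Nat.card_pos
    exact_mod_cast hpos.ne'
  refine ⟨h1, h2, ?_⟩
  have hbt : A.BlockTriangular id := fun i j hij => h1 i j hij
  rw [isUnit_iff_ne_zero, Matrix.det_of_upperTriangular hbt]
  exact Finset.prod_ne_zero_iff.mpr fun i _ => h2 i
end
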